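/- arXiv:1403.0830 — 2 statements merged into one kernel-verified Lean document; each statement's English description precedes it below -/
import Mathlib

section
/- Let S > 0, 0 < M₀ ≤ 1, and L = 0.4. The stationary functions Γ(x) = S x and N(x) = 0.2 S (1/M₀ + M₀) + (S/2)√((0.4(1/M₀+M₀))² - 4x²) satisfy, for |x| < L: Γ'(x) = S, (Γ²/N + N)'(x) = 0, N(x) > 0, and at x = L the Mach number Γ(L)/N(L) equals M₀. -/
/-- The stationary solution Γ(x) = S x,
N(x) = 0.2 S (1/M₀ + M₀) + (S/2)√((0.4(1/M₀+M₀))² - 4x²) satisfies, for |x| < L = 0.4: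
Γ' = S, (Γ²/N + N)' = 0, N > 0, and the Mach number Γ/N equals M₀ at x = L. -/
theorem stmt8 (S M₀ : ℝ) (hS : 0 < S) (hM₀ : 0 < M₀) (hM₀' : M₀ ≤ 1)
    (L : ℝ) (hL : L = 0.4)
    (Γ N : ℝ → ℝ)
    (hΓ : ∀ x, Γ x = S * x)
    (hN : ∀ x, N x = 0.2 * S * (1 / M₀ + M₀)
        + (S / 2) * Real.sqrt ((0.4 * (1 / M₀ + M₀))^2 - 4 * x^2)) :
    (∀ x, |x| < L → deriv Γ x = S) ∧
    (∀ x, |x| < L → deriv (fun y => (Γ y)^2 / N y + N y) x = 0) ∧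
    (∀ x, |x| < L → 0 < N x) ∧
    Γ L / N L = M₀ := by
  have h1 : 1 / M₀ * M₀ = 1 := by field_simp
  have ht : 2 ≤ 1 / M₀ + M₀ := by nlinarith [sq_nonneg (1 - M₀), hM₀]
  -- positivity of N
  have hNpos : ∀ x : ℝ, 0 < N x := by
    intro x
    rw [hN x]
    have hsq : 0 ≤ Real.sqrt ((0.4 * (1 / M₀ + M₀))^2 - 4 * x^2) := Real.sqrt_nonneg _
    nlinarith
  -- the key constancy identity
  have key : ∀ y : ℝ, |y| < L →
      (Γ y)^2 / N y + N y = S * (0.4 * (1 / M₀ + M₀)) := by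
    intro y hy
    have hy2 : y^2 < 0.16 := by
      rw [hL] at hy
      nlinarith [abs_nonneg y, sq_abs y]
    have harg : (0:ℝ) < (0.4 * (1 / M₀ + M₀))^2 - 4 * y^2 := by nlinarith
    have hNy := hN y
    set s := Real.sqrt ((0.4 * (1 / M₀ + M₀))^2 - 4 * y^2) with hsdef
    have hs0 : 0 ≤ s := Real.sqrt_nonneg _
    have hs2 : s^2 = (0.4 * (1 / M₀ + M₀))^2 - 4 * y^2 := Real.sq_sqrt harg.le
    have hNne : N y ≠ 0 := (hNpos y).ne'
    rw [hΓ y, div_add' _ _ _ hNne, div_eq_iff hNne, hNy]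
    linear_combination (S^2/4) * hs2
  -- derivative of Γ
  refine ⟨?_, ?_, fun x _ => hNpos x, ?_⟩
  · intro x _
    have hΓf : Γ = fun y => S * y := funext hΓ
    rw [hΓf]
    simpa using ((hasDerivAt_id x).const_mul S).deriv
  · intro x hx
    have hev : ∀ᶠ y in nhds x, |y| < L :=
      (continuous_abs.continuousAt).eventually_lt continuousAt_const hx
    have heq : (fun y => (Γ y)^2 / N y + N y) =ᶠ[nhds x]
        (fun _ => S * (0.4 * (1 / M₀ + M₀))) :=
      hev.mono fun y hy => key y hy
    rw [heq.deriv_eq, deriv_const]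
  · have hm : 0 ≤ 1 / M₀ - M₀ := by
      have : 1 ≤ 1 / M₀ := by rw [le_div_iff₀ hM₀]; linarith
      linarith
    have hargeq : (0.4 * (1 / M₀ + M₀))^2 - 4 * L^2 = (0.4 * (1 / M₀ - M₀))^2 := by
      rw [hL]; linear_combination (0.64:ℝ) * h1
    have hNL : N L = 0.4 * S / M₀ := by
      rw [hN L, hargeq, Real.sqrt_sq (by linarith : 0 ≤ 0.4 * (1 / M₀ - M₀))]
      field_simp
      ring
    rw [hΓ L, hNL, hL]
    field_simp
end

section
/- In the formal asymptotic expansion of the penalized system, the order ε⁻¹ equation inside the limiter forces V^{0,+}(t,x) = 0 for all t and all x > 0; consequently, at order ε⁰ in the region x > 0, U^{0,+} satisfies the transport equation ∂_t U^{0,+} + M₀ ∂_x U^{0,+} = S_ũ, and V^{1,+} = M₀ (S_ṽ - ∂_x U^{0,+}). -/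
noncomputable def pdt (f : ℝ → ℝ → ℝ) (t x : ℝ) : ℝ := deriv (fun s => f s x) t
noncomputable def pdx (f : ℝ → ℝ → ℝ) (t x : ℝ) : ℝ := deriv (fun y => f t y) x

/-! Dividing the order ε⁻¹ equation by M₀ ≠ 0 gives V⁰ = 0 on the open half-plane x > 0, so both
partial derivatives of V⁰ vanish there as well; substituting into the order ε⁰ equations leaves
the transport equation for U⁰ and an explicit formula for V¹. -/

section HalfPlane

variable {f : ℝ → ℝ → ℝ}

/-- `∂ₓ f (t, x)` only sees `f t` near `x`, and `x > 0` is an open condition. -/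
theorem pdx_eq_zero_of_eq_zero_on_pos (hf : ∀ t x, 0 < x → f t x = 0) {t x : ℝ}
    (hx : 0 < x) : pdx f t x = 0 := by
  have hlocal : (fun y => f t y) =ᶠ[nhds x] fun _ => 0 := by
    filter_upwards [eventually_gt_nhds hx] with y hy using hf t y hy
  rw [pdx, hlocal.deriv_eq, deriv_const]

theorem pdt_eq_zero_of_eq_zero_on_pos (hf : ∀ t x, 0 < x → f t x = 0) {t x : ℝ}
    (hx : 0 < x) : pdt f t x = 0 := by
  have hslice : (fun s => f s x) = fun _ => 0 := funext fun s => hf s x hx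
  rw [pdt, hslice, deriv_const]

end HalfPlane

theorem stmt11_general (M₀ : ℝ) (hM₀ : 0 < M₀)
    (U0 V0 V1 Su Sv : ℝ → ℝ → ℝ)
    -- order ε⁻¹ equation in x > 0:
    (hOrdNeg1 : ∀ t x, 0 < x → V0 t x / M₀ = 0)
    -- order ε⁰ equations in x > 0:
    (hOrd0u : ∀ t x, 0 < x →
        pdt U0 t x + M₀ * pdx U0 t x + V0 t x * pdx U0 t x + pdx V0 t x = Su t x)
    (hOrd0v : ∀ t x, 0 < x →
        pdt V0 t x + pdx U0 t x + M₀ * pdx V0 t x + V0 t x * pdx V0 t x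
          + V1 t x / M₀ = Sv t x) :
    (∀ t x, 0 < x → V0 t x = 0) ∧
    (∀ t x, 0 < x → pdt U0 t x + M₀ * pdx U0 t x = Su t x) ∧
    (∀ t x, 0 < x → V1 t x = M₀ * (Sv t x - pdx U0 t x)) := by
  have hV0 : ∀ t x, 0 < x → V0 t x = 0 := fun t x hx =>
    (div_eq_zero_iff.mp (hOrdNeg1 t x hx)).resolve_right hM₀.ne'
  refine ⟨hV0, fun t x hx => ?_, fun t x hx => ?_⟩
  · have h := hOrd0u t x hx
    rw [hV0 t x hx, pdx_eq_zero_of_eq_zero_on_pos hV0 hx] at h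
    linarith
  · have h := hOrd0v t x hx
    rw [hV0 t x hx, pdx_eq_zero_of_eq_zero_on_pos hV0 hx,
      pdt_eq_zero_of_eq_zero_on_pos hV0 hx] at h
    field_simp at h
    linarith

/-- In the formal asymptotic expansion inside the limiter (x > 0): the ε⁻¹ equation
forces V⁰ = 0; consequently, at order ε⁰, U⁰ solves the transport equation
∂_t U⁰ + M₀ ∂_x U⁰ = S_ũ and V¹ = M₀ (S_ṽ - ∂_x U⁰). -/
theorem stmt11 (M₀ : ℝ) (hM₀ : 0 < M₀) (hM₀' : M₀ < 1)
    (U0 V0 V1 Su Sv : ℝ → ℝ → ℝ)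
    (hV0diff : ∀ t x, 0 < x → DifferentiableAt ℝ (fun y => V0 t y) x ∧
        DifferentiableAt ℝ (fun s => V0 s x) t)
    -- order ε⁻¹ equation in x > 0:
    (hOrdNeg1 : ∀ t x, 0 < x → V0 t x / M₀ = 0)
    -- order ε⁰ equations in x > 0:
    (hOrd0u : ∀ t x, 0 < x →
        pdt U0 t x + M₀ * pdx U0 t x + V0 t x * pdx U0 t x + pdx V0 t x = Su t x)
    (hOrd0v : ∀ t x, 0 < x →
        pdt V0 t x + pdx U0 t x + M₀ * pdx V0 t x + V0 t x * pdx V0 t x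
          + V1 t x / M₀ = Sv t x) :
    (∀ t x, 0 < x → V0 t x = 0) ∧
    (∀ t x, 0 < x → pdt U0 t x + M₀ * pdx U0 t x = Su t x) ∧
    (∀ t x, 0 < x → V1 t x = M₀ * (Sv t x - pdx U0 t x)) :=
  stmt11_general M₀ hM₀ U0 V0 V1 Su Sv hOrdNeg1 hOrd0u hOrd0v
end
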